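/- arXiv:2312.01379 — 3 statements merged into one kernel-verified Lean document; each statement's English description precedes it below -/
import Mathlib

section
/- For any real random variable with finite fourth moment, nonzero variance, skewness γ and kurtosis κ, Pearson's inequality κ ≥ 1 + γ² holds. -/
/-!
For the centred variable `W = Z - m`, the third central moment is the covariance of `W` and `W²`,
so the Cauchy–Schwarz inequality for covariances gives
`μ₃² ≤ Var[W] · Var[W²] = σ² (μ₄ - σ⁴)`; dividing by `σ⁶` is Pearson's inequality.
-/

open MeasureTheory

namespace ProbabilityTheory

variable {Ω : Type*} {mΩ : MeasurableSpace Ω} {μ : Measure Ω} {X Y : Ω → ℝ}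

lemma covariance_sq_le_variance_mul_variance [IsFiniteMeasure μ] (hX : MemLp X 2 μ)
    (hY : MemLp Y 2 μ) : cov[X, Y; μ] ^ 2 ≤ Var[X; μ] * Var[Y; μ] := by
  -- `t ↦ Var[t X + Y]` is a nonnegative quadratic polynomial, so its discriminant is `≤ 0`.
  have hquad (t : ℝ) : 0 ≤ Var[X; μ] * (t * t) + 2 * cov[X, Y; μ] * t + Var[Y; μ] := by
    have hexpand := variance_fun_add (hX.const_mul t) hY
    rw [variance_const_mul, covariance_const_mul_left] at hexpand
    nlinarith [variance_nonneg (fun ω ↦ t * X ω + Y ω) μ]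
  have hdiscrim := discrim_le_zero hquad
  rw [discrim] at hdiscrim
  linarith

lemma _root_.MeasureTheory.MemLp.sq (hX : MemLp X 4 μ) : MemLp (X ^ 2) 2 μ := by
  refine (memLp_two_iff_integrable_sq (hX.aestronglyMeasurable.pow 2)).2 ?_
  have h4 : Integrable (fun ω ↦ ‖X ω‖ ^ 4) μ := hX.integrable_norm_pow (p := 4) (by norm_num)
  refine h4.congr (.of_forall fun ω ↦ ?_)
  simp only [Real.norm_eq_abs, Pi.pow_apply]
  rw [← pow_mul, pow_abs, abs_of_nonneg (by positivity)]

lemma sq_integral_pow_three_le_of_integral_eq_zero [IsProbabilityMeasure μ] (hX : MemLp X 4 μ)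
    (h0 : μ[X] = 0) : μ[X ^ 3] ^ 2 ≤ μ[X ^ 2] * (μ[X ^ 4] - μ[X ^ 2] ^ 2) := by
  have h2 : MemLp X 2 μ := hX.mono_exponent (by norm_num)
  have hsq : MemLp (X ^ 2) 2 μ := hX.sq
  have hcov : cov[X, X ^ 2; μ] = μ[X ^ 3] := by
    rw [covariance_eq_sub h2 hsq, h0, zero_mul, sub_zero]
    congr 1 with ω
    simp only [Pi.mul_apply, Pi.pow_apply]
    ring
  have hvar : Var[X; μ] = μ[X ^ 2] := by rw [variance_eq_sub h2, h0]; ring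
  have hvar_sq : Var[X ^ 2; μ] = μ[X ^ 4] - μ[X ^ 2] ^ 2 := by
    rw [variance_eq_sub hsq, ← pow_mul]
  simpa only [hcov, hvar, hvar_sq] using covariance_sq_le_variance_mul_variance h2 hsq

lemma centralMoment_eq_integral (X : Ω → ℝ) (p : ℕ) (μ : Measure Ω) :
    centralMoment X p μ = ∫ ω, (X ω - μ[X]) ^ p ∂μ := rfl

lemma sq_centralMoment_three_le [IsProbabilityMeasure μ] (hX : MemLp X 4 μ) :
    centralMoment X 3 μ ^ 2 ≤
      centralMoment X 2 μ * (centralMoment X 4 μ - centralMoment X 2 μ ^ 2) := by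
  refine sq_integral_pow_three_le_of_integral_eq_zero (hX.sub (memLp_const _)) ?_
  change ∫ ω, (X ω - μ[X]) ∂μ = 0
  rw [integral_sub (hX.integrable (by norm_num)) (integrable_const _)]
  simp

end ProbabilityTheory

open ProbabilityTheory

theorem pearson_inequality {Ω : Type*} [MeasureSpace Ω]
    [IsProbabilityMeasure (volume : Measure Ω)]
    (Z : Ω → ℝ) (hZ : MemLp Z 4)
    (m σ2 γ κ : ℝ)
    (hm : m = ∫ ω, Z ω)
    (hσ2 : σ2 = ∫ ω, (Z ω - m) ^ 2) (hσpos : 0 < σ2)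
    (hγ : γ = (∫ ω, (Z ω - m) ^ 3) / Real.sqrt σ2 ^ 3)
    (hκ : κ = (∫ ω, (Z ω - m) ^ 4) / σ2 ^ 2) :
    1 + γ ^ 2 ≤ κ := by
  have hpearson := sq_centralMoment_three_le hZ
  simp only [centralMoment_eq_integral, ← hm, ← hσ2] at hpearson
  have hsqrt : (Real.sqrt σ2 ^ 3) ^ 2 = σ2 ^ 3 := by
    rw [← pow_mul, mul_comm, pow_mul, Real.sq_sqrt hσpos.le]
  rw [hκ, hγ, div_pow, hsqrt]
  field_simp
  linarith
end

section
/- Let Σ be symmetric positive definite, b ∈ ℝ^D nonzero, and suppose the eigenvalues of Σ take exactly M distinct values. Then for any L ≥ M, the minimum of ‖β − Σ⁻¹b‖²_Σ over β ∈ K_L(Σ, b) is zero. -/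
open Matrix

/-- The Krylov subspace of order `L` generated by matrix `A` and vector `b`. -/
def krylov {D : ℕ} (A : Matrix (Fin D) (Fin D) ℝ) (b : Fin D → ℝ) (L : ℕ) :
    Submodule ℝ (Fin D → ℝ) :=
  Submodule.span ℝ {v | ∃ i < L, v = (A ^ i).mulVec b}

/-!
The Lagrange interpolant `q` of `x ↦ x⁻¹` at the `M` distinct eigenvalues of `S` has degree
`< M`, and by the functional calculus `q(S) = S⁻¹`. Hence `S⁻¹ b = q(S) b` lies in the Krylov
space of order `M ≤ L`, where the objective vanishes; it is nonnegative everywhere since `S` is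
positive definite.
-/

open Polynomial

theorem aeval_mulVec_mem_krylov {D : ℕ} (A : Matrix (Fin D) (Fin D) ℝ) (b : Fin D → ℝ)
    {q : ℝ[X]} {L : ℕ} (hq : q.degree < L) : aeval A q *ᵥ b ∈ krylov A b L := by
  rcases eq_or_ne q 0 with rfl | hq0
  · simp
  rw [aeval_eq_sum_range' ((natDegree_lt_iff_degree_lt hq0).mpr hq), sum_mulVec]
  refine Submodule.sum_mem _ fun i hi => ?_
  rw [smul_mulVec]
  exact Submodule.smul_mem _ _ (Submodule.subset_span ⟨i, Finset.mem_range.mp hi, rfl⟩)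

theorem Matrix.IsHermitian.aeval_eq_inv_of_eval_eigenvalues {n 𝕜 : Type*} [RCLike 𝕜]
    [Fintype n] [DecidableEq n] {A : Matrix n n 𝕜} (hA : A.IsHermitian) (hA_unit : IsUnit A)
    {q : ℝ[X]} (hq : ∀ i, q.eval (hA.eigenvalues i) = (hA.eigenvalues i)⁻¹) :
    aeval A q = A⁻¹ := by
  rw [← cfc_polynomial q A, nonsing_inv_eq_ringInverse]
  refine (cfc_congr fun x hx => ?_).trans (cfc_ringInverse_id (R := ℝ) A hA_unit)
  obtain ⟨i, rfl⟩ := hA.spectrum_real_eq_range_eigenvalues ▸ hx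
  exact hq i

theorem pls_converges_after_M_components_general {D : ℕ} (S : Matrix (Fin D) (Fin D) ℝ)
    (hpd : S.PosDef) (hS : S.IsHermitian)
    (b : Fin D → ℝ) (M : ℕ)
    (hM : (Finset.univ.image hS.eigenvalues).card = M)
    (L : ℕ) (hL : M ≤ L) :
    IsLeast {r : ℝ | ∃ β ∈ krylov S b L,
      r = (β - S⁻¹.mulVec b) ⬝ᵥ S.mulVec (β - S⁻¹.mulVec b)} 0 := by
  set q : ℝ[X] := Lagrange.interpolate (Finset.univ.image hS.eigenvalues) id (·⁻¹)
  have hq_deg : q.degree < L :=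
    (Lagrange.degree_interpolate_lt _ (Set.injOn_id _)).trans_le (by exact_mod_cast hM ▸ hL)
  have hq_inv : aeval S q = S⁻¹ :=
    hS.aeval_eq_inv_of_eval_eigenvalues hpd.isUnit fun i =>
      Lagrange.eval_interpolate_at_node _ (Set.injOn_id _)
        (Finset.mem_image_of_mem _ (Finset.mem_univ i))
  refine ⟨⟨S⁻¹ *ᵥ b, hq_inv ▸ aeval_mulVec_mem_krylov S b hq_deg, by simp⟩, ?_⟩
  rintro r ⟨β, -, rfl⟩
  exact hpd.posSemidef.dotProduct_mulVec_nonneg _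

theorem pls_converges_after_M_components {D : ℕ} (S : Matrix (Fin D) (Fin D) ℝ)
    (hpd : S.PosDef) (hS : S.IsHermitian)
    (b : Fin D → ℝ) (hb : b ≠ 0) (M : ℕ)
    (hM : (Finset.univ.image hS.eigenvalues).card = M)
    (L : ℕ) (hL : M ≤ L) :
    IsLeast {r : ℝ | ∃ β ∈ krylov S b L,
      r = (β - S⁻¹.mulVec b) ⬝ᵥ S.mulVec (β - S⁻¹.mulVec b)} 0 :=
  pls_converges_after_M_components_general S hpd hS b M hM L hL
end

section
/- Let Σ be symmetric positive definite with eigenvalues λ_1,…,λ_D (with orthonormal eigenvectors u_d), b ∈ ℝ^D, β̂ = Σ⁻¹b with coordinates ξ_d = u_dᵀβ̂. Then min over β ∈ K_L(Σ,b) of ‖β − β̂‖²_Σ ≤ D(1 − c_Lᵀ H_L⁻¹ c_L) · ‖β̂‖²_Σ, where H_L is the Hankel matrix of raw eigenvalue moments (H_L)_{ij} = μ'_{i+j} (assumed invertible) and c_L = (μ'_1,…,μ'_L)ᵀ. -/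
open Matrix

/-! Take the Krylov vector `β₀ = ∑ᵢ wᵢ Σⁱ b` with `w = H_L⁻¹ c_L`. In the eigenbasis,
`β₀ - β̂` has coordinates `q(λ_d) ξ_d` with `q(t) = ∑ᵢ wᵢ t^{i+1} - 1`, so
`‖β₀ - β̂‖²_Σ = ∑_d λ_d q(λ_d)² ξ_d² ≤ (∑_e q(λ_e)²) ‖β̂‖²_Σ`. Expanding the square and summing
over the eigenvalues turns `∑_e q(λ_e)²` into `D (wᵀ H_L w - 2 wᵀ c_L + 1)`, which is
`D (1 - c_Lᵀ H_L⁻¹ c_L)` because `H_L w = c_L`. -/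

namespace Matrix

variable {n : Type*} [Fintype n]

theorem PosSemidef.nonneg_of_mulVec_eq_smul {S : Matrix n n ℝ} (hS : S.PosSemidef) {v : n → ℝ}
    {μ : ℝ} (hv : S *ᵥ v = μ • v) (hv1 : v ⬝ᵥ v = 1) : 0 ≤ μ := by
  simpa [hv, hv1] using hS.dotProduct_mulVec_nonneg v

variable [DecidableEq n]

theorem mulVec_nonsing_inv_mulVec {R : Type*} [CommRing R] {A : Matrix n n R}
    (hA : IsUnit A) (x : n → R) : A *ᵥ (A⁻¹ *ᵥ x) = x := by
  rw [mulVec_mulVec, mul_nonsing_inv _ ((isUnit_iff_isUnit_det A).1 hA), one_mulVec]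

theorem sum_dotProduct_smul_of_orthonormal {R : Type*} [CommRing R]
    {u : n → n → R} (horth : ∀ d e, u d ⬝ᵥ u e = if d = e then 1 else 0) (x : n → R) :
    ∑ d, (u d ⬝ᵥ x) • u d = x := by
  -- A square matrix with orthonormal rows also has orthonormal columns.
  have hU : (of u)ᵀ * of u = 1 := by
    rw [mul_eq_one_comm]
    ext d e
    simpa [mul_apply, one_apply, dotProduct] using horth d e
  calc ∑ d, (u d ⬝ᵥ x) • u d = ((of u)ᵀ * of u) *ᵥ x := by
        rw [← mulVec_mulVec, mulVec_transpose, vecMul_eq_sum]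
        rfl
    _ = x := by rw [hU, one_mulVec]

variable {R : Type*} [CommSemiring R]

theorem pow_mulVec_of_mulVec_eq_smul {S : Matrix n n R} {v : n → R} {μ : R}
    (hv : S *ᵥ v = μ • v) (k : ℕ) : (S ^ k) *ᵥ v = μ ^ k • v := by
  induction k with
  | zero => simp
  | succ k ih => rw [pow_succ, ← mulVec_mulVec, hv, mulVec_smul, ih, smul_smul, pow_succ']

theorem dotProduct_pow_mulVec_of_mulVec_eq_smul {S : Matrix n n R} (hS : Sᵀ = S) {v : n → R}
    {μ : R} (hv : S *ᵥ v = μ • v) (k : ℕ) (x : n → R) :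
    v ⬝ᵥ (S ^ k) *ᵥ x = μ ^ k * (v ⬝ᵥ x) := by
  rw [dotProduct_mulVec, ← mulVec_transpose, transpose_pow, hS,
    pow_mulVec_of_mulVec_eq_smul hv, smul_dotProduct, smul_eq_mul]

end Matrix

section Eigenbasis

variable {n : Type*} [Fintype n] [DecidableEq n] {S : Matrix n n ℝ} {lam : n → ℝ} {u : n → n → ℝ}

theorem dotProduct_mulVec_eq_sum_eigen (horth : ∀ d e, u d ⬝ᵥ u e = if d = e then 1 else 0)
    (heig : ∀ d, S *ᵥ u d = lam d • u d) (x y : n → ℝ) :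
    x ⬝ᵥ S *ᵥ y = ∑ d, lam d * ((u d ⬝ᵥ x) * (u d ⬝ᵥ y)) := by
  conv_lhs => rw [← sum_dotProduct_smul_of_orthonormal horth y]
  rw [mulVec_sum, dotProduct_sum]
  refine Finset.sum_congr rfl fun d _ => ?_
  rw [mulVec_smul, heig, dotProduct_smul, dotProduct_smul, dotProduct_comm x, smul_eq_mul,
    smul_eq_mul]
  ring

theorem dotProduct_mulVec_le_of_eigen_coord (hS : S.PosSemidef)
    (horth : ∀ d e, u d ⬝ᵥ u e = if d = e then 1 else 0)
    (heig : ∀ d, S *ᵥ u d = lam d • u d) {x y : n → ℝ} {r : n → ℝ}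
    (hxy : ∀ d, u d ⬝ᵥ x = r d * (u d ⬝ᵥ y)) :
    x ⬝ᵥ S *ᵥ x ≤ (∑ e, r e ^ 2) * (y ⬝ᵥ S *ᵥ y) := by
  have hlam : ∀ d, 0 ≤ lam d := fun d =>
    hS.nonneg_of_mulVec_eq_smul (heig d) (by simp [horth])
  rw [dotProduct_mulVec_eq_sum_eigen horth heig, dotProduct_mulVec_eq_sum_eigen horth heig,
    Finset.mul_sum]
  refine Finset.sum_le_sum fun d _ => ?_
  have hr : r d ^ 2 ≤ ∑ e, r e ^ 2 :=
    Finset.single_le_sum (fun e _ => sq_nonneg (r e)) (Finset.mem_univ d)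
  rw [hxy]
  nlinarith [mul_nonneg (hlam d) (sq_nonneg (u d ⬝ᵥ y))]

end Eigenbasis

/-- The Krylov vector `∑ᵢ wᵢ Sⁱ b` is `p(S) S⁻¹ b` for `p = krylovPoly w`. -/
def krylovPoly {L : ℕ} (w : Fin L → ℝ) (t : ℝ) : ℝ :=
  ∑ i : Fin L, w i * t ^ ((i : ℕ) + 1)

section Moments

variable {ι : Type*} [Fintype ι] {lam : ι → ℝ} {m : ℕ → ℝ}
  (hm : ∀ k, m k = 1 / (Fintype.card ι : ℝ) * ∑ e, lam e ^ k)
include hm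

theorem sum_pow_eq_card_mul_moment (k : ℕ) : ∑ e, lam e ^ k = Fintype.card ι * m k := by
  rcases isEmpty_or_nonempty ι with _ | _
  · simp
  · rw [hm]
    field_simp

theorem sum_krylovPoly {L : ℕ} {c : Fin L → ℝ} (hc : ∀ i, c i = m ((i : ℕ) + 1))
    (w : Fin L → ℝ) : ∑ e, krylovPoly w (lam e) = Fintype.card ι * (w ⬝ᵥ c) := by
  simp only [krylovPoly, dotProduct, hc]
  rw [Finset.sum_comm, Finset.mul_sum]
  refine Finset.sum_congr rfl fun i _ => ?_
  rw [← Finset.mul_sum, sum_pow_eq_card_mul_moment hm]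
  ring

theorem sum_krylovPoly_sq {L : ℕ} {H : Matrix (Fin L) (Fin L) ℝ}
    (hH : ∀ i j, H i j = m ((i : ℕ) + (j : ℕ) + 2)) (w : Fin L → ℝ) :
    ∑ e, krylovPoly w (lam e) ^ 2 = Fintype.card ι * (w ⬝ᵥ H *ᵥ w) := by
  have hsq : ∀ t, krylovPoly w t ^ 2 =
      ∑ i : Fin L, ∑ j : Fin L, w i * w j * t ^ ((i : ℕ) + (j : ℕ) + 2) := fun t => by
    rw [krylovPoly, sq, Finset.sum_mul_sum]
    refine Finset.sum_congr rfl fun i _ => Finset.sum_congr rfl fun j _ => ?_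
    ring
  simp only [hsq, dotProduct, mulVec, hH]
  rw [Finset.sum_comm, Finset.mul_sum]
  refine Finset.sum_congr rfl fun i _ => ?_
  rw [Finset.sum_comm, Finset.mul_sum, Finset.mul_sum]
  refine Finset.sum_congr rfl fun j _ => ?_
  rw [← Finset.mul_sum, sum_pow_eq_card_mul_moment hm]
  ring

theorem sum_krylovPoly_sub_one_sq {L : ℕ} {H : Matrix (Fin L) (Fin L) ℝ}
    (hH : ∀ i j, H i j = m ((i : ℕ) + (j : ℕ) + 2)) {c : Fin L → ℝ}
    (hc : ∀ i, c i = m ((i : ℕ) + 1)) (w : Fin L → ℝ) :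
    ∑ e, (krylovPoly w (lam e) - 1) ^ 2 =
      Fintype.card ι * (w ⬝ᵥ H *ᵥ w - 2 * (w ⬝ᵥ c) + 1) := by
  simp only [sub_sq, one_pow, mul_one, Finset.sum_add_distrib, Finset.sum_sub_distrib,
    ← Finset.mul_sum, sum_krylovPoly_sq hm hH, sum_krylovPoly hm hc, Finset.sum_const,
    Finset.card_univ, nsmul_eq_mul]
  ring

end Moments

theorem sum_smul_pow_mulVec_mem_krylov {D L : ℕ} (S : Matrix (Fin D) (Fin D) ℝ)
    (b : Fin D → ℝ) (w : Fin L → ℝ) :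
    ∑ i : Fin L, w i • (S ^ (i : ℕ)) *ᵥ b ∈ krylov S b L :=
  Submodule.sum_mem _ fun i _ =>
    Submodule.smul_mem _ _ (Submodule.subset_span ⟨i, i.isLt, rfl⟩)

theorem dotProduct_sum_smul_pow_mulVec_sub {n : Type*} [Fintype n] [DecidableEq n] {L : ℕ}
    {S : Matrix n n ℝ} (hS : Sᵀ = S) {v : n → ℝ} {μ : ℝ} (hv : S *ᵥ v = μ • v)
    {β b : n → ℝ} (hb : S *ᵥ β = b) (w : Fin L → ℝ) :
    v ⬝ᵥ (∑ i : Fin L, w i • (S ^ (i : ℕ)) *ᵥ b - β) = (krylovPoly w μ - 1) * (v ⬝ᵥ β) := by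
  have hpow : ∀ i : Fin L, v ⬝ᵥ (S ^ (i : ℕ)) *ᵥ b = μ ^ ((i : ℕ) + 1) * (v ⬝ᵥ β) := fun i => by
    rw [← hb, mulVec_mulVec, ← pow_succ, dotProduct_pow_mulVec_of_mulVec_eq_smul hS hv]
  simp only [dotProduct_sub, dotProduct_sum, dotProduct_smul, hpow, smul_eq_mul, krylovPoly]
  rw [sub_mul, one_mul, Finset.sum_mul]
  congr 1
  exact Finset.sum_congr rfl fun i _ => by ring

theorem pls_ols_distance_bound {D L : ℕ} (S : Matrix (Fin D) (Fin D) ℝ)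
    (hpd : S.PosDef) (lam : Fin D → ℝ) (u : Fin D → Fin D → ℝ)
    (horth : ∀ d e, u d ⬝ᵥ u e = if d = e then (1 : ℝ) else 0)
    (heig : ∀ d, S.mulVec (u d) = lam d • u d)
    (b : Fin D → ℝ) (βhat : Fin D → ℝ) (hβ : βhat = S⁻¹.mulVec b)
    (m : ℕ → ℝ) (hm : ∀ k, m k = (1 / (D : ℝ)) * ∑ d, lam d ^ k)
    (H : Matrix (Fin L) (Fin L) ℝ) (hH : ∀ i j, H i j = m ((i : ℕ) + (j : ℕ) + 2))
    (c : Fin L → ℝ) (hc : ∀ i, c i = m ((i : ℕ) + 1))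
    (hinv : IsUnit H) :
    sInf {r : ℝ | ∃ β ∈ krylov S b L, r = (β - βhat) ⬝ᵥ S.mulVec (β - βhat)} ≤
      (D : ℝ) * (1 - c ⬝ᵥ H⁻¹.mulVec c) * (βhat ⬝ᵥ S.mulVec βhat) := by
  have hS : Sᵀ = S := hpd.isHermitian.eq
  have hb : S *ᵥ βhat = b := hβ ▸ mulVec_nonsing_inv_mulVec hpd.isUnit b
  have hm_card : ∀ k, m k = 1 / (Fintype.card (Fin D) : ℝ) * ∑ d, lam d ^ k := by
    simpa only [Fintype.card_fin] using hm
  set w := H⁻¹ *ᵥ c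
  have hbdd : BddBelow {r : ℝ | ∃ β ∈ krylov S b L, r = (β - βhat) ⬝ᵥ S *ᵥ (β - βhat)} :=
    ⟨0, by
      rintro _ ⟨β, -, rfl⟩
      simpa using hpd.posSemidef.dotProduct_mulVec_nonneg (β - βhat)⟩
  refine (csInf_le hbdd ⟨_, sum_smul_pow_mulVec_mem_krylov S b w, rfl⟩).trans ?_
  calc _ ≤ (∑ e, (krylovPoly w (lam e) - 1) ^ 2) * (βhat ⬝ᵥ S *ᵥ βhat) :=
        dotProduct_mulVec_le_of_eigen_coord hpd.posSemidef horth heig fun d =>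
          dotProduct_sum_smul_pow_mulVec_sub hS (heig d) hb w
    _ = _ := by
        rw [sum_krylovPoly_sub_one_sq hm_card hH hc, mulVec_nonsing_inv_mulVec hinv,
          dotProduct_comm w c, Fintype.card_fin]
        ring
end
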